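/- Let φ be a diffuse submeasure on a Boolean algebra 𝒜 that is neither hyperbolic nor elliptic (i.e., h_φ is bounded). Then the function f(ξ) := ξ·h_φ(ξ) satisfies the superadditivity-type inequality f(ξ + ζ) ≥ f(ξ) + f(ζ) − f(ξ)·f(ζ) for all ξ, ζ > 0, and consequently lim_{ξ→0⁺} h_φ(ξ) exists and is finite. -/

import Mathlib

/-- The "atom" of the subalgebra generated by the finite sequence `C`,
corresponding to a choice `s` of sides. -/
def atomOf {α : Type*} [BooleanAlgebra α] {m : ℕ} (C : Fin m → α) (s : Fin m → Bool) : α :=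
  Finset.univ.inf (fun i => if s i then C i else (C i)ᶜ)

/-- The covering multiplicity of a finite sequence in a Boolean algebra: the largest `k`
such that every nonzero atom of the generated subalgebra lies below at least `k` of the `C i`. -/
noncomputable def covMult {α : Type*} [BooleanAlgebra α] {m : ℕ} (C : Fin m → α) : ℕ :=
  sSup {k : ℕ | ∀ s : Fin m → Bool, atomOf C s ≠ ⊥ →
    k ≤ (Finset.univ.filter (fun i => s i = true)).card}

/-- Kelley's covering number of a family `ℬ` in a Boolean algebra. -/
noncomputable def covNumber {α : Type*} [BooleanAlgebra α] (ℬ : Set α) : ℝ :=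
  sSup { r : ℝ | ∃ n : ℕ, 0 < n ∧ ∃ C : Fin n → α,
    (∀ i, C i ∈ ℬ) ∧ r = (covMult C : ℝ) / n }

/-- The function `h_φ` associated with a submeasure `φ`. -/
noncomputable def hphi {α : Type*} [BooleanAlgebra α] (φ : α → ℝ) (ξ : ℝ) : ℝ :=
  covNumber {A : α | φ A ≤ ξ} / ξ

/-- A submeasure on a Boolean algebra. -/
def IsSubmeasure {α : Type*} [BooleanAlgebra α] (φ : α → ℝ) : Prop :=
  φ ⊥ = 0 ∧ Monotone φ ∧ ∀ a b : α, φ (a ⊔ b) ≤ φ a + φ b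

/-- A diffuse submeasure: the unit can be covered by finitely many elements of
arbitrarily small submeasure. -/
def IsDiffuse {α : Type*} [BooleanAlgebra α] (φ : α → ℝ) : Prop :=
  ∀ ε : ℝ, 0 < ε → ∃ ℬ : Finset α, ℬ.sup id = ⊤ ∧ ∀ B ∈ ℬ, φ B ≤ ε

/-- A (nonnegative, finitely additive) measure on a Boolean algebra. -/
def IsAddMeasure {α : Type*} [BooleanAlgebra α] (μ : α → ℝ) : Prop :=
  μ ⊥ = 0 ∧ (∀ a, 0 ≤ μ a) ∧ ∀ a b : α, Disjoint a b → μ (a ⊔ b) = μ a + μ b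

/-!
Joining every member of a sequence of length `m` with uniform multiplicity `k` with every member
of a sequence of length `n` with uniform multiplicity `l` gives a sequence of length `mn` in which
every nonzero atom misses at most `(m - k)(n - l)` members. Passing to suprema,
`c(ξ) = ξ h_φ(ξ)` satisfies `1 - c(ξ + ζ) ≤ (1 - c(ξ))(1 - c(ζ))`, so `ψ = -log (1 - c)` is
superadditive near `0`, and a Fekete-type argument shows that `ψ(ξ)/ξ` tends to its infimum as
`ξ → 0⁺`. The bound `h_φ ≤ M` forces `c(ξ) → 0`, and then `c ≤ ψ ≤ c / (1 - c)` gives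
`c(ξ)/ξ` the same limit.
-/

open Finset Filter Set Topology

lemma apply_csSup_csSup_le {X Y Z : Type*} [ConditionallyCompleteLinearOrder X]
    [TopologicalSpace X] [OrderTopology X] [ConditionallyCompleteLinearOrder Y]
    [TopologicalSpace Y] [OrderTopology Y] [LinearOrder Z] [TopologicalSpace Z]
    [OrderClosedTopology Z] {F : X × Y → Z} (hF : Continuous F) {S : Set X} {T : Set Y}
    (hS : S.Nonempty) (hS' : BddAbove S) (hT : T.Nonempty) (hT' : BddAbove T) {b : Z}
    (h : ∀ x ∈ S, ∀ y ∈ T, F (x, y) ≤ b) : F (sSup S, sSup T) ≤ b := by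
  have hmem : (sSup S, sSup T) ∈ closure (S ×ˢ T) := by
    rw [closure_prod_eq]
    exact ⟨csSup_mem_closure hS hS', csSup_mem_closure hT hT'⟩
  exact closure_minimal (fun p hp => h _ hp.1 _ hp.2) (isClosed_le hF continuous_const) hmem

section BooleanAlgebra

variable {α : Type*} [BooleanAlgebra α]

lemma exists_inf_ite_ne_bot {x : α} (hx : x ≠ ⊥) (a : α) :
    ∃ b : Bool, x ⊓ (if b then a else aᶜ) ≠ ⊥ := by
  by_contra! h
  obtain ⟨h₁, h₂⟩ : x ⊓ a = ⊥ ∧ x ⊓ aᶜ = ⊥ := ⟨by simpa using h true, by simpa using h false⟩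
  exact hx (by rw [← inf_top_eq x, ← sup_compl_eq_top (x := a), inf_sup_left, h₁, h₂, sup_idem])

lemma exists_inf_finsetInf_ite_ne_bot {ι : Type*} (C : ι → α) {x : α} (hx : x ≠ ⊥)
    (F : Finset ι) : ∃ s : ι → Bool, x ⊓ F.inf (fun i => if s i then C i else (C i)ᶜ) ≠ ⊥ := by
  classical
  induction F using Finset.induction with
  | empty => exact ⟨fun _ => true, by simpa using hx⟩
  | insert j F hj ih =>
    obtain ⟨s, hs⟩ := ih
    obtain ⟨b, hb⟩ := exists_inf_ite_ne_bot hs (C j)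
    refine ⟨Function.update s j b, ?_⟩
    have hF : F.inf (fun i => if Function.update s j b i then C i else (C i)ᶜ) =
        F.inf (fun i => if s i then C i else (C i)ᶜ) :=
      Finset.inf_congr rfl fun i hi => by rw [Function.update_of_ne (ne_of_mem_of_not_mem hi hj)]
    rw [Finset.inf_insert, hF, Function.update_self, inf_comm (if b then _ else _), ← inf_assoc]
    exact hb

lemma exists_atomOf_inf_ne_bot {m : ℕ} (C : Fin m → α) {x : α} (hx : x ≠ ⊥) :
    ∃ s, x ⊓ atomOf C s ≠ ⊥ :=
  exists_inf_finsetInf_ite_ne_bot C hx univ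

lemma exists_atomOf_ne_bot [Nontrivial α] {m : ℕ} (C : Fin m → α) : ∃ s, atomOf C s ≠ ⊥ := by
  simpa using exists_atomOf_inf_ne_bot C top_ne_bot

lemma atomOf_le {m : ℕ} (C : Fin m → α) (s : Fin m → Bool) (i : Fin m) :
    atomOf C s ≤ if s i then C i else (C i)ᶜ :=
  Finset.inf_le (mem_univ i)

lemma le_covMult_iff [Nontrivial α] {m : ℕ} {C : Fin m → α} {k : ℕ} :
    k ≤ covMult C ↔ ∀ s, atomOf C s ≠ ⊥ → k ≤ #{i | s i = true} := by
  obtain ⟨s₀, hs₀⟩ := exists_atomOf_ne_bot C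
  have hbdd : BddAbove {k : ℕ | ∀ s, atomOf C s ≠ ⊥ → k ≤ #{i | s i = true}} :=
    ⟨_, fun k hk => hk s₀ hs₀⟩
  refine ⟨fun hk s hs => hk.trans ?_, fun h => le_csSup hbdd h⟩
  exact Nat.sSup_mem (by exact ⟨0, fun _ _ => Nat.zero_le _⟩) hbdd s hs

lemma covMult_le [Nontrivial α] {m : ℕ} (C : Fin m → α) : covMult C ≤ m := by
  obtain ⟨s, hs⟩ := exists_atomOf_ne_bot C
  exact (le_covMult_iff.1 le_rfl s hs).trans ((card_filter_le _ _).trans_eq (card_fin m))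

lemma covMult_eq_zero [Subsingleton α] {m : ℕ} (C : Fin m → α) : covMult C = 0 := by
  have huniv : {k : ℕ | ∀ s, atomOf C s ≠ ⊥ → k ≤ #{i | s i = true}} = univ :=
    eq_univ_of_forall fun _ s hs => (hs (Subsingleton.elim _ _)).elim
  rw [covMult, huniv, csSup_of_not_bddAbove not_bddAbove_univ, csSup_empty, bot_eq_zero]

lemma le_ite_sup {x c d : α} {t u : Bool} (hc : x ≤ if t then c else cᶜ)
    (hd : x ≤ if u then d else dᶜ) : x ≤ if (t || u) then c ⊔ d else (c ⊔ d)ᶜ := by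
  cases t <;> cases u <;> simp_all [le_sup_of_le_left, le_sup_of_le_right]

lemma eq_of_le_ite {x a : α} (hx : x ≠ ⊥) {b b' : Bool} (h : x ≤ if b then a else aᶜ)
    (h' : x ≤ if b' then a else aᶜ) : b = b' := by
  have key : ¬(x ≤ a ∧ x ≤ aᶜ) := fun ⟨h₁, h₂⟩ =>
    hx (le_bot_iff.1 ((le_inf h₁ h₂).trans_eq inf_compl_eq_bot))
  cases b <;> cases b' <;> simp only [Bool.false_eq_true, if_true, if_false] at h h'
  exacts [rfl, (key ⟨h', h⟩).elim, (key ⟨h, h'⟩).elim, rfl]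

def pairwiseSup {m n : ℕ} (C : Fin m → α) (D : Fin n → α) : Fin (m * n) → α :=
  fun p => C (finProdFinEquiv.symm p).1 ⊔ D (finProdFinEquiv.symm p).2

lemma card_filter_eq_false_le_sub_covMult [Nontrivial α] {m : ℕ} {C : Fin m → α}
    {t : Fin m → Bool} (ht : atomOf C t ≠ ⊥) : #{i | t i = false} ≤ m - covMult C := by
  have hsplit := card_filter_add_card_filter_not (s := (univ : Finset (Fin m)))
    (fun i => t i = true)
  simp only [Bool.not_eq_true, card_fin] at hsplit
  have := le_covMult_iff.1 le_rfl t ht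
  omega

lemma card_filter_eq_false_le_sub_mul_sub [Nontrivial α] {m n : ℕ} (C : Fin m → α)
    (D : Fin n → α) {s : Fin (m * n) → Bool} (hs : atomOf (pairwiseSup C D) s ≠ ⊥) :
    #{p | s p = false} ≤ (m - covMult C) * (n - covMult D) := by
  obtain ⟨t, ht⟩ := exists_atomOf_inf_ne_bot C hs
  obtain ⟨u, hu⟩ := exists_atomOf_inf_ne_bot D ht
  -- `hu` is a nonzero element below `atomOf (pairwiseSup C D) s`, `atomOf C t` and `atomOf D u`.
  have hst : ∀ p, s p = (t (finProdFinEquiv.symm p).1 || u (finProdFinEquiv.symm p).2) :=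
    fun p => eq_of_le_ite hu (inf_le_left.trans (inf_le_left.trans (atomOf_le _ s p)))
      (le_ite_sup (inf_le_left.trans (inf_le_right.trans (atomOf_le C t _)))
        (inf_le_right.trans (atomOf_le D u _)))
  have hcard : #{p | s p = false} = #{i | t i = false} * #{j | u j = false} := by
    rw [← card_product, ← filter_product]
    refine card_equiv finProdFinEquiv.symm fun p => ?_
    simp [hst]
  rw [hcard]
  exact Nat.mul_le_mul (card_filter_eq_false_le_sub_covMult fun h => ht (by rw [h, inf_bot_eq]))
    (card_filter_eq_false_le_sub_covMult fun h => hu (by rw [h, inf_bot_eq]))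

lemma sub_mul_sub_le_covMult_pairwiseSup [Nontrivial α] {m n : ℕ} (C : Fin m → α)
    (D : Fin n → α) :
    m * n - (m - covMult C) * (n - covMult D) ≤ covMult (pairwiseSup C D) := by
  refine le_covMult_iff.2 fun s hs => ?_
  have hsplit := card_filter_add_card_filter_not (s := (univ : Finset (Fin (m * n))))
    (fun p => s p = true)
  simp only [Bool.not_eq_true, card_fin] at hsplit
  have := card_filter_eq_false_le_sub_mul_sub C D hs
  omega

lemma add_sub_mul_le_covMult_pairwiseSup_div [Nontrivial α] {m n : ℕ} (hm : 0 < m) (hn : 0 < n)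
    (C : Fin m → α) (D : Fin n → α) :
    (covMult C : ℝ) / m + covMult D / n - covMult C / m * (covMult D / n) ≤
      covMult (pairwiseSup C D) / (m * n : ℕ) := by
  have hC := covMult_le C
  have hD := covMult_le D
  have hle : (m - covMult C) * (n - covMult D) ≤ m * n :=
    Nat.mul_le_mul (Nat.sub_le _ _) (Nat.sub_le _ _)
  have hcast : ((m * n - (m - covMult C) * (n - covMult D) : ℕ) : ℝ) ≤ covMult (pairwiseSup C D) :=
    Nat.cast_le.2 (sub_mul_sub_le_covMult_pairwiseSup C D)
  calc (covMult C : ℝ) / m + covMult D / n - covMult C / m * (covMult D / n)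
      = ((m * n - (m - covMult C) * (n - covMult D) : ℕ) : ℝ) / (m * n : ℕ) := by
        push_cast [hC, hD, hle]
        field_simp
        ring
    _ ≤ covMult (pairwiseSup C D) / (m * n : ℕ) := by gcongr

def covRatios (ℬ : Set α) : Set ℝ :=
  {r | ∃ n : ℕ, 0 < n ∧ ∃ C : Fin n → α, (∀ i, C i ∈ ℬ) ∧ r = (covMult C : ℝ) / n}

lemma covRatios_nonempty {ℬ : Set α} (hℬ : ℬ.Nonempty) : (covRatios ℬ).Nonempty :=
  ⟨_, 1, one_pos, fun _ => hℬ.some, fun _ => hℬ.some_mem, rfl⟩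

lemma nonneg_of_mem_covRatios {ℬ : Set α} {r : ℝ} (hr : r ∈ covRatios ℬ) : 0 ≤ r := by
  obtain ⟨n, -, C, -, rfl⟩ := hr
  positivity

lemma bddAbove_covRatios [Nontrivial α] (ℬ : Set α) : BddAbove (covRatios ℬ) := by
  refine ⟨1, ?_⟩
  rintro _ ⟨n, hn, C, -, rfl⟩
  exact div_le_one_of_le₀ (Nat.cast_le.2 (covMult_le C)) n.cast_nonneg

lemma covMult_div_le_covNumber [Nontrivial α] {ℬ : Set α} {n : ℕ} (hn : 0 < n) {C : Fin n → α}
    (hC : ∀ i, C i ∈ ℬ) : (covMult C : ℝ) / n ≤ covNumber ℬ :=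
  le_csSup (bddAbove_covRatios ℬ) ⟨n, hn, C, hC, rfl⟩

lemma covNumber_nonneg (ℬ : Set α) : 0 ≤ covNumber ℬ :=
  Real.sSup_nonneg fun _ => nonneg_of_mem_covRatios

lemma covNumber_eq_zero [Subsingleton α] (ℬ : Set α) : covNumber ℬ = 0 := by
  refine le_antisymm (Real.sSup_nonpos ?_) (covNumber_nonneg ℬ)
  rintro _ ⟨n, -, C, -, rfl⟩
  simp [covMult_eq_zero]

lemma covNumber_add_sub_mul_le [Nontrivial α] {ℬ₁ ℬ₂ ℬ₃ : Set α} (h₁ : ℬ₁.Nonempty)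
    (h₂ : ℬ₂.Nonempty) (hsup : ∀ a ∈ ℬ₁, ∀ b ∈ ℬ₂, a ⊔ b ∈ ℬ₃) :
    covNumber ℬ₁ + covNumber ℬ₂ - covNumber ℬ₁ * covNumber ℬ₂ ≤ covNumber ℬ₃ := by
  refine apply_csSup_csSup_le (F := fun p => p.1 + p.2 - p.1 * p.2) (by fun_prop)
    (covRatios_nonempty h₁) (bddAbove_covRatios ℬ₁) (covRatios_nonempty h₂)
    (bddAbove_covRatios ℬ₂) ?_
  rintro _ ⟨m, hm, C, hC, rfl⟩ _ ⟨n, hn, D, hD, rfl⟩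
  exact (add_sub_mul_le_covMult_pairwiseSup_div hm hn C D).trans
    (covMult_div_le_covNumber (Nat.mul_pos hm hn) fun p => hsup _ (hC _) _ (hD _))

end BooleanAlgebra

section Superadditive

def SuperadditiveBelow (ψ : ℝ → ℝ) (δ : ℝ) : Prop :=
  ∀ ξ ζ, 0 < ξ → 0 < ζ → ξ + ζ < δ → ψ ξ + ψ ζ ≤ ψ (ξ + ζ)

variable {ψ : ℝ → ℝ} {δ : ℝ}

lemma SuperadditiveBelow.nat_mul_le (hψ : SuperadditiveBelow ψ δ) {ξ : ℝ} (hξ : 0 < ξ)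
    {n : ℕ} (hn : 1 ≤ n) (hnξ : n * ξ < δ) : n * ψ ξ ≤ ψ (n * ξ) := by
  induction n, hn using Nat.le_induction with
  | base => simp
  | succ n hn ih =>
    push_cast at hnξ ⊢
    have hn' : (0 : ℝ) < n := by exact_mod_cast hn
    calc (n + 1) * ψ ξ = n * ψ ξ + ψ ξ := by ring
      _ ≤ ψ (n * ξ) + ψ ξ := by gcongr; exact ih (by nlinarith)
      _ ≤ ψ ((n + 1) * ξ) := by
        rw [add_one_mul]; exact hψ _ _ (by positivity) hξ (by linarith)

lemma SuperadditiveBelow.monotoneOn (hψ : SuperadditiveBelow ψ δ)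
    (h0 : ∀ ξ ∈ Ioo 0 δ, 0 ≤ ψ ξ) : MonotoneOn ψ (Ioo 0 δ) := by
  intro ξ hξ ζ hζ hle
  rcases hle.eq_or_lt with rfl | hlt
  · rfl
  · have := hψ ξ (ζ - ξ) hξ.1 (sub_pos.2 hlt) (by linarith [hζ.2])
    have := h0 (ζ - ξ) ⟨sub_pos.2 hlt, by linarith [hζ.2, hξ.1]⟩
    simp only [add_sub_cancel] at *
    linarith

lemma SuperadditiveBelow.div_le_div_sub (hψ : SuperadditiveBelow ψ δ)
    (h0 : ∀ ξ ∈ Ioo 0 δ, 0 ≤ ψ ξ) {ξ ζ : ℝ} (hξ : 0 < ξ) (hξζ : ξ < ζ) (hζ : ζ < δ) :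
    ψ ξ / ξ ≤ ψ ζ / (ζ - ξ) := by
  set n := ⌊ζ / ξ⌋₊
  have hn : 1 ≤ n := Nat.le_floor (by rw [Nat.cast_one, le_div_iff₀ hξ]; linarith)
  have hnξ : n * ξ ≤ ζ := (le_div_iff₀ hξ).1 (Nat.floor_le (div_pos (hξ.trans hξζ) hξ).le)
  have hζn : ζ - ξ ≤ n * ξ := by
    have := (div_lt_iff₀ hξ).1 (Nat.lt_floor_add_one (ζ / ξ))
    linarith
  have hn' : (0 : ℝ) < n := by exact_mod_cast hn
  calc ψ ξ / ξ = n * ψ ξ / (n * ξ) := by field_simp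
    _ ≤ ψ ζ / (n * ξ) := by
      gcongr
      exact (hψ.nat_mul_le hξ hn (by linarith)).trans
        (hψ.monotoneOn h0 ⟨by positivity, by linarith⟩ ⟨by linarith, hζ⟩ hnξ)
    _ ≤ ψ ζ / (ζ - ξ) := by
      gcongr
      exact h0 ζ ⟨by linarith, hζ⟩

lemma SuperadditiveBelow.tendsto_div_nhdsGT (hψ : SuperadditiveBelow ψ δ) (hδ : 0 < δ)
    (h0 : ∀ ξ ∈ Ioo 0 δ, 0 ≤ ψ ξ) :
    Tendsto (fun ξ => ψ ξ / ξ) (𝓝[>] 0) (𝓝 (sInf ((fun ξ => ψ ξ / ξ) '' Ioo 0 δ))) := by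
  set S := (fun ξ => ψ ξ / ξ) '' Ioo 0 δ
  have hS : S.Nonempty := (Set.nonempty_Ioo.2 hδ).image _
  have hS' : BddBelow S := ⟨0, by rintro _ ⟨ξ, hξ, rfl⟩; exact div_nonneg (h0 ξ hξ) hξ.1.le⟩
  refine tendsto_order.2 ⟨fun a ha => ?_, fun a ha => ?_⟩
  · filter_upwards [Ioo_mem_nhdsGT hδ] with ξ hξ
    exact ha.trans_le (csInf_le hS' ⟨ξ, hξ, rfl⟩)
  · obtain ⟨_, ⟨ζ, hζ, rfl⟩, hζa⟩ := exists_lt_of_csInf_lt hS ha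
    have hlim : Tendsto (fun ξ => ψ ζ / (ζ - ξ)) (𝓝[>] 0) (𝓝 (ψ ζ / (ζ - 0))) :=
      tendsto_nhdsWithin_of_tendsto_nhds
        (tendsto_const_nhds.div (tendsto_const_nhds.sub tendsto_id) (by linarith [hζ.1]))
    rw [sub_zero] at hlim
    filter_upwards [Ioo_mem_nhdsGT hζ.1, hlim.eventually_lt_const hζa] with ξ hξ hξa
    exact (hψ.div_le_div_sub h0 hξ.1 hξ.2 hζ.2).trans_lt hξa

end Superadditive

lemma exists_tendsto_div_of_add_sub_mul_le {c : ℝ → ℝ} (h0 : ∀ ξ, 0 < ξ → 0 ≤ c ξ)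
    (hsup : ∀ ξ, 0 < ξ → ∀ ζ, 0 < ζ → c ξ + c ζ - c ξ * c ζ ≤ c (ξ + ζ))
    (hc : Tendsto c (𝓝[>] 0) (𝓝 0)) : ∃ L, Tendsto (fun ξ => c ξ / ξ) (𝓝[>] 0) (𝓝 L) := by
  obtain ⟨δ, hδ, hlt⟩ := mem_nhdsGT_iff_exists_Ioo_subset.1 (hc.eventually (gt_mem_nhds one_pos))
  have hpos : ∀ ξ ∈ Ioo 0 δ, 0 < 1 - c ξ := fun ξ hξ => sub_pos.2 (hlt hξ)
  set ψ : ℝ → ℝ := fun ξ => -Real.log (1 - c ξ)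
  have hψ0 : ∀ ξ ∈ Ioo 0 δ, 0 ≤ ψ ξ := fun ξ hξ =>
    neg_nonneg.2 (Real.log_nonpos (hpos ξ hξ).le (by linarith [h0 ξ hξ.1]))
  have hψ : SuperadditiveBelow ψ δ := by
    intro ξ ζ hξ hζ hξζ
    have hmul := Real.log_le_log (hpos _ ⟨add_pos hξ hζ, hξζ⟩)
      (show 1 - c (ξ + ζ) ≤ (1 - c ξ) * (1 - c ζ) by linarith [hsup ξ hξ ζ hζ])
    rw [Real.log_mul (hpos ξ ⟨hξ, by linarith⟩).ne' (hpos ζ ⟨hζ, by linarith⟩).ne'] at hmul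
    simp only [ψ]
    linarith
  have hlow : ∀ ξ ∈ Ioo 0 δ, ψ ξ * (1 - c ξ) ≤ c ξ := fun ξ hξ => by
    have hlog := mul_le_mul_of_nonneg_right (Real.one_sub_inv_le_log_of_pos (hpos ξ hξ))
      (hpos ξ hξ).le
    rw [sub_mul, inv_mul_cancel₀ (hpos ξ hξ).ne'] at hlog
    simp only [ψ]
    linarith
  have hup : ∀ ξ ∈ Ioo 0 δ, c ξ ≤ ψ ξ := fun ξ hξ => by
    have hlog := Real.log_le_sub_one_of_pos (hpos ξ hξ)
    simp only [ψ]
    linarith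
  have hL := hψ.tendsto_div_nhdsGT hδ hψ0
  refine ⟨_, tendsto_of_tendsto_of_tendsto_of_le_of_le'
    (g := fun ξ => ψ ξ / ξ * (1 - c ξ)) ?_ hL ?_ ?_⟩
  · simpa using hL.mul ((tendsto_const_nhds (x := (1 : ℝ))).sub hc)
  · filter_upwards [Ioo_mem_nhdsGT hδ] with ξ hξ
    rw [div_mul_eq_mul_div]
    exact div_le_div_of_nonneg_right (hlow ξ hξ) hξ.1.le
  · filter_upwards [Ioo_mem_nhdsGT hδ] with ξ hξ
    exact div_le_div_of_nonneg_right (hup ξ hξ) hξ.1.le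

theorem parabolic_hphi_limit_general {α : Type*} [BooleanAlgebra α] (φ : α → ℝ)
    (hφ : IsSubmeasure φ)
    (M : ℝ) (hM : ∀ ξ : ℝ, 0 < ξ → hphi φ ξ ≤ M) :
    (∀ ξ : ℝ, 0 < ξ → ∀ ζ : ℝ, 0 < ζ →
        ξ * hphi φ ξ + ζ * hphi φ ζ - (ξ * hphi φ ξ) * (ζ * hphi φ ζ) ≤
          (ξ + ζ) * hphi φ (ξ + ζ)) ∧
      ∃ L : ℝ, Filter.Tendsto (fun ξ => hphi φ ξ) (nhdsWithin 0 (Set.Ioi 0)) (nhds L) := by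
  rcases subsingleton_or_nontrivial α with hα | hα
  · have h0 : hphi φ = 0 := funext fun ξ => by simp [hphi, covNumber_eq_zero]
    exact ⟨fun _ _ _ _ => by simp [h0], 0, by simp [h0]⟩
  set c : ℝ → ℝ := fun ξ => covNumber {A : α | φ A ≤ ξ}
  have hmul : ∀ ξ, 0 < ξ → ξ * hphi φ ξ = c ξ := fun ξ hξ => mul_div_cancel₀ _ hξ.ne'
  have hbot : ∀ ξ, 0 < ξ → (⊥ : α) ∈ {A : α | φ A ≤ ξ} := fun ξ hξ => by simp [hφ.1, hξ.le]
  have hsup : ∀ ξ, 0 < ξ → ∀ ζ, 0 < ζ → c ξ + c ζ - c ξ * c ζ ≤ c (ξ + ζ) :=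
    fun ξ hξ ζ hζ => covNumber_add_sub_mul_le ⟨⊥, hbot ξ hξ⟩ ⟨⊥, hbot ζ hζ⟩
      fun a ha b hb => (hφ.2.2 a b).trans (add_le_add ha hb)
  refine ⟨fun ξ hξ ζ hζ => ?_, ?_⟩
  · rw [hmul ξ hξ, hmul ζ hζ, hmul _ (add_pos hξ hζ)]
    exact hsup ξ hξ ζ hζ
  have hc : Tendsto c (𝓝[>] 0) (𝓝 0) :=
    squeeze_zero' (eventually_nhdsWithin_of_forall fun ξ _ => covNumber_nonneg _)
      (eventually_nhdsWithin_of_forall fun ξ hξ =>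
        (hmul ξ hξ).symm.trans_le (mul_le_mul_of_nonneg_left (hM ξ hξ) (le_of_lt hξ)))
      (tendsto_nhdsWithin_of_tendsto_nhds
        (by simpa using (tendsto_id (x := 𝓝 (0 : ℝ))).mul_const M))
  exact exists_tendsto_div_of_add_sub_mul_le (fun _ _ => covNumber_nonneg _) hsup hc

/-- For a diffuse submeasure with bounded `h_φ` (i.e. neither hyperbolic nor elliptic,
in the parabolic case), `f(ξ) = ξ·h_φ(ξ)` is almost superadditive and `h_φ` has a
finite limit at `0⁺`. -/
theorem parabolic_hphi_limit {α : Type*} [BooleanAlgebra α] (φ : α → ℝ)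
    (hφ : IsSubmeasure φ) (hd : IsDiffuse φ)
    (M : ℝ) (hM : ∀ ξ : ℝ, 0 < ξ → hphi φ ξ ≤ M) :
    (∀ ξ : ℝ, 0 < ξ → ∀ ζ : ℝ, 0 < ζ →
        ξ * hphi φ ξ + ζ * hphi φ ζ - (ξ * hphi φ ξ) * (ζ * hphi φ ζ) ≤
          (ξ + ζ) * hphi φ (ξ + ζ)) ∧
      ∃ L : ℝ, Filter.Tendsto (fun ξ => hphi φ ξ) (nhdsWithin 0 (Set.Ioi 0)) (nhds L) :=
  parabolic_hphi_limit_general φ hφ M hM
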